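/- arXiv:1508.07451 — 2 statements merged into one kernel-verified Lean document; each statement's English description precedes it below -/
import Mathlib

section
/- Every tight chiral rotation pair of type (p, q) covers some tight rotation pair (chiral or orientably regular) either of type (p', q) for some p' < p or of type (p, q') for some q' < q. Furthermore, every tight chiral rotation pair covers some tight orientably regular rotation pair. -/
/-- A rotation pair of type `(p, q)`: the group is generated by `a` and `b`,
`a` has order `p`, `b` has order `q`, `p, q ≥ 2`, `(a*b)^2 = 1`, and the cyclic
subgroups generated by `a` and `b` intersect trivially. -/
def IsRotPair {G : Type*} [Group G] (a b : G) (p q : ℕ) : Prop :=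
  Subgroup.closure ({a, b} : Set G) = ⊤ ∧ orderOf a = p ∧ orderOf b = q ∧
    2 ≤ p ∧ 2 ≤ q ∧ (a * b) ^ 2 = 1 ∧
    Subgroup.zpowers a ⊓ Subgroup.zpowers b = ⊥

/-- Tightness: every element is `a ^ i * b ^ j` for some integers `i, j`. -/
def IsTight {G : Type*} [Group G] (a b : G) : Prop :=
  ∀ g : G, ∃ i j : ℤ, g = a ^ i * b ^ j

/-- Orientably regular: some group automorphism inverts both generators. -/
def IsOrientablyRegular {G : Type*} [Group G] (a b : G) : Prop :=
  ∃ φ : G ≃* G, φ a = a⁻¹ ∧ φ b = b⁻¹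

/-- Chiral: no group automorphism inverts both generators. -/
def IsChiral {G : Type*} [Group G] (a b : G) : Prop :=
  ¬ IsOrientablyRegular a b

/-- `(G, a, b)` covers `(H, a', b')` if a homomorphism sends `a ↦ a'`, `b ↦ b'`. -/
def Covers {G H : Type*} [Group G] [Group H] (a b : G) (a' b' : H) : Prop :=
  ∃ f : G →* H, f a = a' ∧ f b = b'

/-- An atomic chiral rotation pair of type `(p, q)`: a tight chiral rotation pair
covering no tight chiral rotation pair of type `(p', q)` with `p' < p` nor one of
type `(p, q')` with `q' < q`. -/
def IsAtomicPair {G : Type*} [Group G] (a b : G) (p q : ℕ) : Prop :=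
  IsRotPair a b p q ∧ IsTight a b ∧ IsChiral a b ∧
  (∀ (H : Type) (instH : Group H) (_ : Finite H) (a' b' : H) (p' : ℕ), p' < p →
      @IsRotPair H instH a' b' p' q → @IsTight H instH a' b' → @IsChiral H instH a' b' →
      ¬ @Covers G H _ instH a b a' b') ∧
  (∀ (H : Type) (instH : Group H) (_ : Finite H) (a' b' : H) (q' : ℕ), q' < q →
      @IsRotPair H instH a' b' p q' → @IsTight H instH a' b' → @IsChiral H instH a' b' →
      ¬ @Covers G H _ instH a b a' b')


/-!
Let `B = ⟨b⟩` and `N = B ∩ a⁻¹Ba`. A subgroup of the cyclic group `B` is determined by its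
order, and `aNa⁻¹ = aBa⁻¹ ∩ B` has the order of `N`, so `a` normalizes `N`; `b` centralizes `B`,
hence `N` is normal. If `p ≤ q` then `N ≠ 1`: otherwise `(y, z) ↦ y a⁻¹ z` embeds `B × B` into
`G ∖ {1}`, which has fewer than `pq ≤ q²` elements. If `b ∈ N` then `a² ∈ ⟨a⟩ ∩ B = 1` and
conjugation by `a` inverts both generators; otherwise `G/N` is a tight rotation pair of type
`(p, q / |N|)`. The pair `(b⁻¹, a⁻¹)` of type `(q, p)` handles `q < p`, and iterating the
descent, which decreases `p + q`, ends at an orientably regular pair.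
-/

open Subgroup

section CyclicSubgroups

variable {G : Type*} [Group G] {b : G}

theorem Subgroup.card_dvd_orderOf_of_le_zpowers {K : Subgroup G} (hK : K ≤ zpowers b) :
    Nat.card K ∣ orderOf b := by
  simpa only [Nat.card_zpowers] using card_dvd_of_le hK

variable [Finite G]

theorem Subgroup.le_zpowers_pow_orderOf_div_card {K : Subgroup G} (hK : K ≤ zpowers b) :
    K ≤ zpowers (b ^ (orderOf b / Nat.card K)) := by
  obtain ⟨d, hd⟩ := card_dvd_orderOf_of_le_zpowers hK
  have hK0 : 0 < Nat.card K := Nat.card_pos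
  rw [hd, Nat.mul_div_cancel_left _ hK0]
  intro x hx
  obtain ⟨j, rfl⟩ := mem_zpowers_iff.mp (hK hx)
  have hj : (Nat.card K * d : ℤ) ∣ j * Nat.card K := by
    rw [← Nat.cast_mul, ← hd, orderOf_dvd_iff_zpow_eq_one, zpow_mul, zpow_natCast,
      ← orderOf_dvd_iff_pow_eq_one]
    exact K.orderOf_dvd_natCard hx
  obtain ⟨m, rfl⟩ : (d : ℤ) ∣ j := by
    rw [mul_comm] at hj
    exact Int.dvd_of_mul_dvd_mul_right (by exact_mod_cast hK0.ne') hj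
  exact ⟨m, by simp [zpow_mul]⟩

theorem Subgroup.eq_zpowers_pow_orderOf_div_card {K : Subgroup G} (hK : K ≤ zpowers b) :
    K = zpowers (b ^ (orderOf b / Nat.card K)) := by
  refine eq_of_le_of_card_ge (le_zpowers_pow_orderOf_div_card hK) ?_
  have hdvd := card_dvd_orderOf_of_le_zpowers hK
  rw [Nat.card_zpowers, orderOf_pow_of_dvd (Nat.div_pos (Nat.le_of_dvd (orderOf_pos b) hdvd)
    Nat.card_pos).ne' (Nat.div_dvd_of_dvd hdvd), Nat.div_div_self hdvd (orderOf_pos b).ne']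

theorem Subgroup.eq_of_le_zpowers_of_card_eq {H K : Subgroup G} (hH : H ≤ zpowers b)
    (hK : K ≤ zpowers b) (hcard : Nat.card H = Nat.card K) : H = K := by
  rw [eq_zpowers_pow_orderOf_div_card hH, eq_zpowers_pow_orderOf_div_card hK, hcard]

end CyclicSubgroups

theorem exists_surjective_monoidHom_ker_eq {G : Type*} [Group G] [Finite G] (N : Subgroup G)
    [N.Normal] :
    ∃ (H : Type) (_ : Group H) (_ : Finite H) (f : G →* H), Function.Surjective f ∧ f.ker = N := by
  have : Small.{0} (G ⧸ N) := Countable.toSmall _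
  let e : G ⧸ N ≃* Shrink.{0} (G ⧸ N) := Shrink.mulEquiv.symm
  refine ⟨Shrink.{0} (G ⧸ N), inferInstance, Finite.of_equiv _ e.toEquiv,
    e.toMonoidHom.comp (QuotientGroup.mk' N),
    e.surjective.comp (QuotientGroup.mk'_surjective N), ?_⟩
  ext x
  simp

section Homomorphisms

variable {G H : Type*} [Group G] [Group H] (f : G →* H)

theorem orderOf_map_eq_of_ker_inf_zpowers_eq_bot {a : G} (h : f.ker ⊓ zpowers a = ⊥) :
    orderOf (f a) = orderOf a := by
  refine Nat.dvd_antisymm (orderOf_map_dvd f a) (orderOf_dvd_of_pow_eq_one ?_)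
  have hker : a ^ orderOf (f a) ∈ f.ker := by
    rw [MonoidHom.mem_ker, map_pow, pow_orderOf_eq_one]
  have hmem : a ^ orderOf (f a) ∈ f.ker ⊓ zpowers a := ⟨hker, npow_mem_zpowers a _⟩
  rwa [h, mem_bot] at hmem

theorem orderOf_map_lt_of_ker_inf_zpowers_ne_bot {b : G} (hb : 0 < orderOf b)
    (h : f.ker ⊓ zpowers b ≠ ⊥) : orderOf (f b) < orderOf b := by
  obtain ⟨⟨x, hker, hx⟩, hx1⟩ := ne_bot_iff_exists_ne_one.mp h
  obtain ⟨j, rfl⟩ := mem_zpowers_iff.mp hx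
  have hfb : (orderOf (f b) : ℤ) ∣ j := by
    rwa [orderOf_dvd_iff_zpow_eq_one, ← map_zpow]
  refine (Nat.le_of_dvd hb (orderOf_map_dvd f b)).lt_of_ne fun heq => hx1 ?_
  rw [heq, orderOf_dvd_iff_zpow_eq_one] at hfb
  exact Subtype.ext hfb

end Homomorphisms

section RotationPairs

variable {G H : Type*} [Group G] [Group H] {a b : G} {p q : ℕ}

theorem Covers.trans {K : Type*} [Group K] {a' b' : H} {a'' b'' : K} (h : Covers a b a' b')
    (h' : Covers a' b' a'' b'') : Covers a b a'' b'' := by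
  obtain ⟨f, rfl, rfl⟩ := h
  obtain ⟨g, rfl, rfl⟩ := h'
  exact ⟨g.comp f, rfl, rfl⟩

theorem Covers.swap {a' b' : H} (h : Covers a b a' b') : Covers b⁻¹ a⁻¹ b'⁻¹ a'⁻¹ := by
  obtain ⟨f, rfl, rfl⟩ := h
  exact ⟨f, map_inv f b, map_inv f a⟩

theorem IsTight.swap (h : IsTight a b) : IsTight b⁻¹ a⁻¹ := by
  intro g
  obtain ⟨i, j, hg⟩ := h g⁻¹
  refine ⟨j, i, ?_⟩
  rw [← inv_inv g, hg, mul_inv_rev, inv_zpow, inv_zpow]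

theorem IsOrientablyRegular.swap (h : IsOrientablyRegular a b) : IsOrientablyRegular b⁻¹ a⁻¹ := by
  obtain ⟨φ, ha, hb⟩ := h
  exact ⟨φ, by rw [map_inv, hb], by rw [map_inv, ha]⟩

theorem IsRotPair.swap (h : IsRotPair a b p q) : IsRotPair b⁻¹ a⁻¹ q p := by
  obtain ⟨hcl, hoa, hob, hp, hq, hsq, hbot⟩ := h
  refine ⟨?_, by rwa [orderOf_inv], by rwa [orderOf_inv], hq, hp, ?_, ?_⟩
  · rw [eq_top_iff, ← hcl, closure_le, Set.insert_subset_iff, Set.singleton_subset_iff]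
    exact ⟨by simpa using inv_mem (subset_closure (by simp) : a⁻¹ ∈ closure {b⁻¹, a⁻¹}),
      by simpa using inv_mem (subset_closure (by simp) : b⁻¹ ∈ closure {b⁻¹, a⁻¹})⟩
  · rw [← mul_inv_rev, inv_pow, hsq, inv_one]
  · rwa [zpowers_inv, zpowers_inv, inf_comm]

theorem IsTight.card_le [Finite G] (h : IsTight a b) : Nat.card G ≤ orderOf a * orderOf b := by
  rw [← Nat.card_zpowers, ← Nat.card_zpowers, ← Nat.card_prod]
  refine Nat.card_le_card_of_surjective (fun x : zpowers a × zpowers b => (x.1 : G) * x.2) ?_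
  intro g
  obtain ⟨i, j, rfl⟩ := h g
  exact ⟨(⟨a ^ i, zpow_mem_zpowers a i⟩, ⟨b ^ j, zpow_mem_zpowers b j⟩), rfl⟩

variable {f : G →* H}

theorem IsTight.map (h : IsTight a b) (hf : Function.Surjective f) : IsTight (f a) (f b) := by
  intro x
  obtain ⟨g, rfl⟩ := hf x
  obtain ⟨i, j, rfl⟩ := h g
  exact ⟨i, j, by rw [map_mul, map_zpow, map_zpow]⟩

theorem IsRotPair.map (h : IsRotPair a b p q) (hf : Function.Surjective f)
    (hker : f.ker ≤ zpowers b) (hb : 2 ≤ orderOf (f b)) :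
    IsRotPair (f a) (f b) p (orderOf (f b)) := by
  obtain ⟨hcl, hoa, -, hp, -, hsq, hbot⟩ := h
  have hdisj : ∀ i : ℤ, a ^ i ∈ zpowers b → a ^ i = 1 := fun i hi =>
    disjoint_def.mp (disjoint_iff.mpr hbot) (zpow_mem_zpowers a i) hi
  refine ⟨?_, ?_, rfl, hp, hb, by rw [← map_mul, ← map_pow, hsq, map_one], ?_⟩
  · rw [← Set.image_pair, ← MonoidHom.map_closure, hcl, ← MonoidHom.range_eq_map,
      MonoidHom.range_eq_top_of_surjective f hf]
  · rw [← hoa]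
    refine orderOf_map_eq_of_ker_inf_zpowers_eq_bot f (eq_bot_iff.mpr ?_)
    rintro x ⟨hxk, hxa⟩
    obtain ⟨i, rfl⟩ := mem_zpowers_iff.mp hxa
    exact hdisj i (hker hxk)
  · refine eq_bot_iff.mpr ?_
    rintro x ⟨hxa, hxb⟩
    obtain ⟨i, rfl⟩ := mem_zpowers_iff.mp hxa
    obtain ⟨j, hj⟩ := mem_zpowers_iff.mp hxb
    have hmem : a ^ i * (b ^ j)⁻¹ ∈ f.ker := by
      rw [MonoidHom.mem_ker, map_mul, map_inv, map_zpow, map_zpow, hj, mul_inv_cancel]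
    have hai : a ^ i = 1 := hdisj i <| by
      simpa using mul_mem (hker hmem) (zpow_mem_zpowers b j)
    rw [mem_bot, ← map_zpow, hai, map_one]

end RotationPairs

section ConjugateIntersection

variable {G : Type*} [Group G] {a b : G}

def zpowersInfConj (a b : G) : Subgroup G :=
  zpowers b ⊓ (zpowers b).comap (MulAut.conj a).toMonoidHom

theorem mem_zpowersInfConj {x : G} :
    x ∈ zpowersInfConj a b ↔ x ∈ zpowers b ∧ a * x * a⁻¹ ∈ zpowers b :=
  Iff.rfl

theorem zpowersInfConj_le_zpowers : zpowersInfConj a b ≤ zpowers b :=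
  inf_le_left

theorem zpowersInfConj_normal [Finite G] (hcl : closure {a, b} = ⊤) :
    (zpowersInfConj a b).Normal := by
  set N := zpowersInfConj a b
  have hmap : N.map (MulAut.conj a).toMonoidHom = N :=
    eq_of_le_zpowers_of_card_eq (map_le_iff_le_comap.mpr inf_le_right)
      zpowersInfConj_le_zpowers (card_map_of_injective (MulAut.conj a).injective)
  have hconj_a : ∀ n ∈ (N : Set G), a * n * a⁻¹ ∈ (N : Set G) := fun n hn => by
    rw [SetLike.mem_coe, ← hmap]
    exact mem_map_of_mem _ hn
  have hconj_b : ∀ n ∈ (N : Set G), b * n * b⁻¹ ∈ (N : Set G) := fun n hn => by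
    obtain ⟨j, rfl⟩ := mem_zpowers_iff.mp (zpowersInfConj_le_zpowers hn)
    have hcomm : b * b ^ j * b⁻¹ = b ^ j := by group
    rwa [hcomm]
  rw [← normalizer_eq_top_iff, eq_top_iff, ← hcl, closure_le, Set.insert_subset_iff,
    Set.singleton_subset_iff]
  exact ⟨mem_normalizer_fintype hconj_a, mem_normalizer_fintype hconj_b⟩

theorem zpowersInfConj_ne_bot [Finite G] (ha : a ∉ zpowers b)
    (hcard : Nat.card G ≤ orderOf b * orderOf b) : zpowersInfConj a b ≠ ⊥ := by
  intro hN
  let φ : zpowers b × zpowers b → G := fun x => x.1 * a⁻¹ * x.2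
  have hinj : Function.Injective φ := by
    rintro ⟨⟨y, hy⟩, ⟨z, hz⟩⟩ ⟨⟨y', hy'⟩, ⟨z', hz'⟩⟩ h
    have h' : y * a⁻¹ * z = y' * a⁻¹ * z' := h
    have hconj : a * (y'⁻¹ * y) * a⁻¹ = z' * z⁻¹ := calc
      _ = a * y'⁻¹ * (y * a⁻¹ * z) * z⁻¹ := by group
      _ = a * y'⁻¹ * (y' * a⁻¹ * z') * z⁻¹ := by rw [h']
      _ = z' * z⁻¹ := by group
    have hyy : y'⁻¹ * y = 1 := by
      rw [← mem_bot, ← hN, mem_zpowersInfConj, hconj]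
      exact ⟨mul_mem (inv_mem hy') hy, mul_mem hz' (inv_mem hz)⟩
    obtain rfl : y = y' := (inv_mul_eq_one.mp hyy).symm
    obtain rfl : z = z' := mul_left_cancel h'
    rfl
  have hone : 1 ∉ Set.range φ := by
    rintro ⟨⟨⟨y, hy⟩, ⟨z, hz⟩⟩, h⟩
    have h' : y * a⁻¹ * z = 1 := h
    have hzy : a = z * y := calc
      a = z * (y * a⁻¹ * z)⁻¹ * y := by group
      _ = z * y := by rw [h', inv_one, mul_one]
    exact ha (hzy ▸ mul_mem hz hy)
  classical
  have := Fintype.ofFinite G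
  have hlt := Fintype.card_lt_of_injective_of_notMem φ hinj hone
  rw [← Nat.card_eq_fintype_card, ← Nat.card_eq_fintype_card, Nat.card_prod,
    Nat.card_zpowers] at hlt
  omega

theorem isOrientablyRegular_of_mem_zpowersInfConj (hsq : (a * b) ^ 2 = 1)
    (hbot : zpowers a ⊓ zpowers b = ⊥) (hb : b ∈ zpowersInfConj a b) :
    IsOrientablyRegular a b := by
  have haba : a * b * a = b⁻¹ := eq_inv_of_mul_eq_one_left (by rw [← hsq, sq, mul_assoc])
  have hbab : b * a * b = a⁻¹ := eq_inv_of_mul_eq_one_right (by rw [← hsq, sq]; group)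
  have ha2 : a * a = 1 := by
    have hinv : (a * a)⁻¹ = b * (a * b * a⁻¹) := calc
      _ = a⁻¹ * a⁻¹ := mul_inv_rev a a
      _ = b * a * b * a⁻¹ := by rw [hbab]
      _ = b * (a * b * a⁻¹) := by group
    have hmem : (a * a)⁻¹ ∈ zpowers a ⊓ zpowers b :=
      mem_inf.mpr ⟨inv_mem (mul_mem (mem_zpowers a) (mem_zpowers a)),
        hinv ▸ mul_mem (mem_zpowers b) (mem_zpowersInfConj.mp hb).2⟩
    rwa [hbot, mem_bot, inv_eq_one] at hmem
  have hainv : a⁻¹ = a := inv_eq_of_mul_eq_one_right ha2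
  refine ⟨MulAut.conj a, ?_, ?_⟩
  · rw [MulAut.conj_apply, mul_inv_cancel_right, hainv]
  · rw [MulAut.conj_apply, hainv, haba]

end ConjugateIntersection

section Descent

variable {G : Type*} [Group G] {a b : G} {p q : ℕ}

def CoversSmallerTightPair (a b : G) (p q : ℕ) : Prop :=
  ∃ (H : Type) (_ : Group H) (_ : Finite H) (a' b' : H),
    IsTight a' b' ∧ Covers a b a' b' ∧
      ((∃ p' : ℕ, p' < p ∧ IsRotPair a' b' p' q) ∨ (∃ q' : ℕ, q' < q ∧ IsRotPair a' b' p q'))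

def CoversTightRegularPair (a b : G) : Prop :=
  ∃ (H : Type) (_ : Group H) (_ : Finite H) (a' b' : H) (p' q' : ℕ),
    IsRotPair a' b' p' q' ∧ IsTight a' b' ∧ IsOrientablyRegular a' b' ∧ Covers a b a' b'

theorem CoversTightRegularPair.of_covers {H : Type*} [Group H] {a' b' : H}
    (hcov : Covers a b a' b') (h : CoversTightRegularPair a' b') : CoversTightRegularPair a b := by
  obtain ⟨K, _, _, a'', b'', p', q', hpair, ht, hreg, hcov'⟩ := h
  exact ⟨K, _, ‹_›, a'', b'', p', q', hpair, ht, hreg, hcov.trans hcov'⟩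

theorem IsRotPair.isOrientablyRegular_or_exists_covers_of_le [Finite G] (h : IsRotPair a b p q)
    (ht : IsTight a b) (hpq : p ≤ q) :
    IsOrientablyRegular a b ∨ ∃ (H : Type) (_ : Group H) (_ : Finite H) (a' b' : H) (q' : ℕ),
      q' < q ∧ IsRotPair a' b' p q' ∧ IsTight a' b' ∧ Covers a b a' b' := by
  have ⟨hcl, hoa, hob, hp, _, hsq, hbot⟩ := h
  have := zpowersInfConj_normal hcl
  set N := zpowersInfConj a b
  by_cases hbN : b ∈ N
  · exact Or.inl (isOrientablyRegular_of_mem_zpowersInfConj hsq hbot hbN)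
  right
  have ha : a ∉ zpowers b := fun ha => by
    have ha1 : a = 1 := disjoint_def.mp (disjoint_iff.mpr hbot) (mem_zpowers a) ha
    rw [ha1, orderOf_one] at hoa
    omega
  have hN : N ≠ ⊥ := zpowersInfConj_ne_bot ha <| by
    rw [hob]
    exact ht.card_le.trans (hoa ▸ hob ▸ Nat.mul_le_mul_right q hpq)
  obtain ⟨H, _, _, f, hf, hker⟩ := exists_surjective_monoidHom_ker_eq N
  have hNb : f.ker ≤ zpowers b := hker ▸ zpowersInfConj_le_zpowers
  have hfb : 2 ≤ orderOf (f b) := by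
    have hb1 : f b ≠ 1 := by rwa [ne_eq, ← MonoidHom.mem_ker, hker]
    have := orderOf_pos (f b)
    have := orderOf_eq_one_iff.not.mpr hb1
    omega
  refine ⟨H, _, ‹_›, f a, f b, orderOf (f b), ?_, h.map hf hNb hfb, ht.map hf, f, rfl, rfl⟩
  refine hob ▸ orderOf_map_lt_of_ker_inf_zpowers_ne_bot f (orderOf_pos b) ?_
  rwa [inf_of_le_left hNb, hker]

theorem IsRotPair.isOrientablyRegular_or_coversSmallerTightPair [Finite G]
    (h : IsRotPair a b p q) (ht : IsTight a b) :
    IsOrientablyRegular a b ∨ CoversSmallerTightPair a b p q := by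
  rcases le_total p q with hpq | hqp
  · refine (h.isOrientablyRegular_or_exists_covers_of_le ht hpq).imp_right ?_
    rintro ⟨H, _, _, a', b', q', hq', h', ht', hcov⟩
    exact ⟨H, _, ‹_›, a', b', ht', hcov, Or.inr ⟨q', hq', h'⟩⟩
  · rcases h.swap.isOrientablyRegular_or_exists_covers_of_le ht.swap hqp with
      hreg | ⟨H, _, _, b', a', p', hp', h', ht', hcov⟩
    · left
      simpa using hreg.swap
    · right
      exact ⟨H, _, ‹_›, a'⁻¹, b'⁻¹, ht'.swap, by simpa using hcov.swap, Or.inl ⟨p', hp', h'.swap⟩⟩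

-- `G : Type` because in the orientably regular case `G` itself is the cover's target.
theorem IsRotPair.coversTightRegularPair {G : Type} [Group G] [Finite G] {a b : G}
    (h : IsRotPair a b p q) (ht : IsTight a b) : CoversTightRegularPair a b := by
  obtain ⟨n, hn⟩ : ∃ n, p + q = n := ⟨_, rfl⟩
  induction n using Nat.strong_induction_on generalizing G p q with
  | _ n ih =>
    rcases h.isOrientablyRegular_or_coversSmallerTightPair ht with
      hreg | ⟨H, _, _, a', b', ht', hcov, ⟨p', hp', h'⟩ | ⟨q', hq', h'⟩⟩
    · exact ⟨G, _, ‹_›, a, b, p, q, h, ht, hreg, MonoidHom.id G, rfl, rfl⟩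
    all_goals exact (ih _ (by omega) h' ht' rfl).of_covers hcov

end Descent

/-- Every tight chiral rotation pair covers a tight rotation pair of strictly smaller
type, and covers some tight orientably regular rotation pair. -/
theorem tight_chiral_quotients {G : Type*} [Group G] [Finite G] (a b : G) (p q : ℕ)
    (hpair : IsRotPair a b p q) (htight : IsTight a b) (hchiral : IsChiral a b) :
    (∃ (H : Type) (instH : Group H) (_ : Finite H) (a' b' : H),
        @IsTight H instH a' b' ∧ @Covers G H _ instH a b a' b' ∧
        ((∃ p' : ℕ, p' < p ∧ @IsRotPair H instH a' b' p' q) ∨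
         (∃ q' : ℕ, q' < q ∧ @IsRotPair H instH a' b' p q'))) ∧
    (∃ (H : Type) (instH : Group H) (_ : Finite H) (a' b' : H) (p' q' : ℕ),
        @IsRotPair H instH a' b' p' q' ∧ @IsTight H instH a' b' ∧
        @IsOrientablyRegular H instH a' b' ∧ @Covers G H _ instH a b a' b') := by
  have hsmaller : CoversSmallerTightPair a b p q :=
    (hpair.isOrientablyRegular_or_coversSmallerTightPair htight).resolve_left hchiral
  refine ⟨hsmaller, ?_⟩
  obtain ⟨H, _, _, a', b', ht', hcov, ⟨p', -, h'⟩ | ⟨q', -, h'⟩⟩ := hsmaller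
  all_goals exact (h'.coversTightRegularPair ht').of_covers hcov
end

section
/- Let α, β be integers with α ≥ 3, β ≥ 5, and β ≥ α + 1, and let ε ∈ {1, −1}. Let G = Λ(2^α, 2^β; 3, 1 + ε·2^(β−2), −3, −1 + ε·2^(β−2)) and let a, b be the images in G of the two generators. Then (G, a, b) is a tight chiral rotation pair of type (2^α, 2^β); that is: G is finite with orderOf a = 2^α, orderOf b = 2^β, (a*b)^2 = 1, Subgroup.zpowers a ⊓ Subgroup.zpowers b = ⊥, every element of G equals a^i * b^j for some integers i, j, and no group automorphism of G sends a to a⁻¹ and b to b⁻¹. -/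
/-!
From `(xy)² = 1` and `y⁻¹x = x³y^{j₁}` one gets `y x² = x² y^{j₁}`, so the set `⟨x⟩⟨y⟩`
is stable under left multiplication by `y^{±1}`; it is therefore the whole group, which gives
tightness and finiteness. The orders of `x` and `y` and the trivial intersection of `⟨x⟩` and
`⟨y⟩` are read off two permutation representations, modelled on the actions on the cosets of
`⟨x⟩` and of `⟨y⟩`. On `ZMod 2^β`, `y` acts as `z ↦ z + 1` and `x` as the quadratic map
`z ↦ (t - 1) z - t z²`, which fixes `0`, where `2t = ε 2^(β-2)`; the identities needed hold
because `2t² = 0`, `8t = 0` and `t² z² = t² z`. On `ZMod 2^α`, `x` acts as `i ↦ i + 1` and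
`y` moves the odd residues by `-2`. Finally, an automorphism inverting `x` and `y` carries the
fourth relation to `y x⁻¹ = x⁻³ y^{-j₁}`, and the fifth then forces `y^{j₁ + j₂} = 1`,
although `j₁ + j₂ = ε 2^(β-1)` is not a multiple of the order `2^β` of `y`.
-/

/-- The relators of the group `Λ(p, q; i₁, j₁, i₂, j₂)`:
`x^p`, `y^q`, `(xy)²`, `y⁻¹ x (x^(i₁) y^(j₁))⁻¹`, `y x⁻¹ (x^(i₂) y^(j₂))⁻¹`. -/
def lambdaRels (p q : ℕ) (i₁ j₁ i₂ j₂ : ℤ) : Set (FreeGroup (Fin 2)) :=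
  {(FreeGroup.of 0) ^ p,
   (FreeGroup.of 1) ^ q,
   (FreeGroup.of 0 * FreeGroup.of 1) ^ 2,
   (FreeGroup.of 1)⁻¹ * FreeGroup.of 0 *
     ((FreeGroup.of 0) ^ i₁ * (FreeGroup.of 1) ^ j₁)⁻¹,
   FreeGroup.of 1 * (FreeGroup.of 0)⁻¹ *
     ((FreeGroup.of 0) ^ i₂ * (FreeGroup.of 1) ^ j₂)⁻¹}

/-- The presented group `Λ(p, q; i₁, j₁, i₂, j₂)`. -/
abbrev Lambda (p q : ℕ) (i₁ j₁ i₂ j₂ : ℤ) : Type :=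
  PresentedGroup (lambdaRels p q i₁ j₁ i₂ j₂)

theorem orderOf_addLeft {A : Type*} [AddGroup A] (a : A) :
    orderOf (Equiv.addLeft a) = addOrderOf a := by
  rw [← orderOf_ofAdd_eq_addOrderOf, orderOf_eq_orderOf_iff]
  intro n
  rw [Equiv.nsmul_addLeft, ← ofAdd_nsmul, ofAdd_eq_one]
  exact ⟨fun h => by simpa using congrArg (· 0) h, fun h => by ext; simp [h]⟩

theorem zpow_mul_pow_eq_of_mul_eq {G : Type*} [Group G] {y c : G} {r : ℤ}
    (h : y * c = c * y ^ r) (s : ℤ) (m : ℕ) : y ^ s * c ^ m = c ^ m * y ^ (s * r ^ m) := by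
  have hstep (k : ℤ) : y ^ k * c = c * y ^ (k * r) := by
    have hconj : c⁻¹ * y * c = y ^ r := by rw [mul_assoc, h, inv_mul_cancel_left]
    have hk : c⁻¹ * y ^ k * c = y ^ (k * r) := by
      simpa [hconj, ← zpow_mul, mul_comm] using (conj_zpow (a := c⁻¹) (b := y) (i := k)).symm
    rw [← hk]
    group
  induction m generalizing s with
  | zero => simp
  | succ m ih => rw [pow_succ, ← mul_assoc, ih, mul_assoc, hstep, pow_succ, ← mul_assoc]; group

theorem exists_eq_zpow_mul_zpow_of_closure_eq_top {G : Type*} [Group G] {x y : G}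
    (hgen : Subgroup.closure {x, y} = ⊤) (hx : IsOfFinOrder x)
    (hy : ∀ n : ℕ, ∃ i j : ℤ, y * x ^ n = x ^ i * y ^ j)
    (hy' : ∀ n : ℕ, ∃ i j : ℤ, y⁻¹ * x ^ n = x ^ i * y ^ j) (g : G) :
    ∃ i j : ℤ, g = x ^ i * y ^ j := by
  have hpow : ∀ i : ℤ, ∃ n : ℕ, x ^ n = x ^ i := fun i =>
    hx.mem_powers_iff_mem_zpowers.mpr ⟨i, rfl⟩
  have hg : g ∈ Subgroup.closure {x, y} := hgen ▸ Subgroup.mem_top g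
  induction hg using Subgroup.closure_induction_left with
  | one => exact ⟨0, 0, by simp⟩
  | mul_left z hz g _ ih =>
    obtain ⟨i, j, rfl⟩ := ih
    rcases hz with rfl | rfl
    · exact ⟨i + 1, j, by group⟩
    · obtain ⟨n, hn⟩ := hpow i
      obtain ⟨k, l, hkl⟩ := hy n
      exact ⟨k, l + j, by rw [← mul_assoc, ← hn, hkl]; group⟩
  | inv_mul_cancel z hz g _ ih =>
    obtain ⟨i, j, rfl⟩ := ih
    rcases hz with rfl | rfl
    · exact ⟨i - 1, j, by group⟩
    · obtain ⟨n, hn⟩ := hpow i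
      obtain ⟨k, l, hkl⟩ := hy' n
      exact ⟨k, l + j, by rw [← mul_assoc, ← hn, hkl]; group⟩

theorem finite_of_forall_eq_zpow_mul_zpow {G : Type*} [Group G] {x y : G}
    (hx : IsOfFinOrder x) (hy : IsOfFinOrder y) (h : ∀ g : G, ∃ i j : ℤ, g = x ^ i * y ^ j) :
    Finite G := by
  refine Set.finite_univ_iff.mp ((hx.finite_zpowers.image2 (· * ·) hy.finite_zpowers).subset ?_)
  intro g _
  obtain ⟨i, j, rfl⟩ := h g
  exact ⟨_, ⟨i, rfl⟩, _, ⟨j, rfl⟩, rfl⟩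

theorem orderOf_eq_of_map {G H : Type*} [Group G] [Group H] (f : G →* H) {x : G} {n : ℕ}
    (hx : x ^ n = 1) (hf : orderOf (f x) = n) : orderOf x = n :=
  Nat.dvd_antisymm (orderOf_dvd_of_pow_eq_one hx) (hf ▸ orderOf_map_dvd f x)

theorem zpowers_inf_zpowers_eq_bot_of_map {G X : Type*} [Group G] (f : G →* Equiv.Perm X)
    {a b : G} {x₀ : X} (ha : f a x₀ = x₀)
    (hb : ∀ j : ℤ, (f b ^ j) x₀ = x₀ → b ^ j = 1) :
    Subgroup.zpowers a ⊓ Subgroup.zpowers b = ⊥ := by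
  rw [eq_bot_iff]
  rintro g ⟨⟨i, rfl : a ^ i = g⟩, ⟨j, hj : b ^ j = a ^ i⟩⟩
  have : (f b ^ j) x₀ = x₀ := by
    rw [← map_zpow, hj, map_zpow]
    exact Equiv.Perm.zpow_apply_eq_self_of_apply_eq_self ha i
  rw [Subgroup.mem_bot, ← hj, hb j this]

theorem orderOf_addLeft_one (q : ℕ) : orderOf (Equiv.addLeft (1 : ZMod q)) = q := by
  rw [orderOf_addLeft, ZMod.addOrderOf_one]

theorem addLeft_one_pow_self (q : ℕ) : Equiv.addLeft (1 : ZMod q) ^ q = 1 := by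
  simpa only [orderOf_addLeft_one] using pow_orderOf_eq_one (Equiv.addLeft (1 : ZMod q))

theorem Equiv.addLeft_one_zpow_apply {q : ℕ} (k : ℤ) (z : ZMod q) :
    (Equiv.addLeft (1 : ZMod q) ^ k) z = k + z := by
  simp

theorem ZMod.mul_sq_eq_mul_of_two_mul_eq_zero {n : ℕ} {c : ZMod n} (hc : 2 * c = 0)
    (z : ZMod n) : c * z ^ 2 = c * z := by
  obtain ⟨m, rfl⟩ := ZMod.intCast_surjective z
  obtain ⟨k, hk⟩ := Int.even_mul_pred_self m
  have : ((m ^ 2 - m : ℤ) : ZMod n) = ((2 * k : ℤ) : ZMod n) := by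
    rw [show m ^ 2 - m = 2 * k by linear_combination hk]
  push_cast at this
  linear_combination c * this + k * hc

theorem ZMod.pow_eq_zero_of_le (n : ℕ) {m k : ℕ} (h : m ≤ k) :
    (n : ZMod (n ^ m)) ^ k = 0 := by
  exact_mod_cast (ZMod.natCast_eq_zero_iff _ _).mpr (pow_dvd_pow n h)

section QuadraticPerm

variable {q : ℕ} {t : ZMod q}

def quadMap (t : ZMod q) (z : ZMod q) : ZMod q := (t - 1) * z - t * z ^ 2

theorem quadMap_quadMap (h2 : 2 * t ^ 2 = 0) (z : ZMod q) :
    quadMap t (quadMap t z) = (1 - 2 * t) * z := by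
  have hsq := ZMod.mul_sq_eq_mul_of_two_mul_eq_zero h2
  unfold quadMap
  linear_combination (-1 - 2 * z + t * z - t * z ^ 2) * hsq z

noncomputable def quadPerm (h2 : 2 * t ^ 2 = 0) : Equiv.Perm (ZMod q) :=
  Equiv.ofBijective (quadMap t) <| by
    have hleft : Function.LeftInverse (fun z => (1 + 2 * t) * quadMap t z) (quadMap t) := by
      intro z
      simp only [quadMap_quadMap h2]
      linear_combination (-2 * z) * h2
    have hright : Function.RightInverse (fun z => quadMap t ((1 + 2 * t) * z)) (quadMap t) := by
      intro z
      simp only [quadMap_quadMap h2]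
      linear_combination (-2 * z) * h2
    exact ⟨hleft.injective, hright.surjective⟩

theorem quadPerm_apply (h2 : 2 * t ^ 2 = 0) (z : ZMod q) : quadPerm h2 z = quadMap t z := rfl

theorem quadPerm_sq_apply (h2 : 2 * t ^ 2 = 0) (z : ZMod q) :
    (quadPerm h2 ^ 2) z = (1 - 2 * t) * z := by
  rw [sq, Equiv.Perm.mul_apply, quadPerm_apply, quadPerm_apply, quadMap_quadMap h2]

end QuadraticPerm

section OddShift

variable {p : ℕ} (hp : 2 ∣ p)

def parity : ZMod p →+* ZMod 2 := ZMod.castHom hp (ZMod 2)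

theorem parity_add_two_mul (i c : ZMod p) : parity hp (i + 2 * c) = parity hp i := by
  rw [map_add, map_mul, map_ofNat, show (2 : ZMod 2) = 0 from rfl, zero_mul, add_zero]

theorem parity_two : parity hp 2 = 0 := by rw [map_ofNat]; rfl

theorem parity_three : parity hp 3 = 1 := by rw [map_ofNat]; rfl

def oddShiftFun (c i : ZMod p) : ZMod p := if parity hp i = 0 then i else i + 2 * c

theorem oddShiftFun_oddShiftFun (c d i : ZMod p) :
    oddShiftFun hp c (oddShiftFun hp d i) = oddShiftFun hp (c + d) i := by
  unfold oddShiftFun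
  by_cases h : parity hp i = 0
  · simp [h]
  · simp only [h, parity_add_two_mul, if_false]
    ring

theorem oddShiftFun_zero (i : ZMod p) : oddShiftFun hp 0 i = i := by
  simp [oddShiftFun]

def oddShift (c : ZMod p) : Equiv.Perm (ZMod p) where
  toFun := oddShiftFun hp c
  invFun := oddShiftFun hp (-c)
  left_inv i := by rw [oddShiftFun_oddShiftFun, neg_add_cancel, oddShiftFun_zero]
  right_inv i := by rw [oddShiftFun_oddShiftFun, add_neg_cancel, oddShiftFun_zero]

theorem oddShift_apply (c i : ZMod p) :
    oddShift hp c i = if parity hp i = 0 then i else i + 2 * c := rfl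

theorem oddShift_zero : oddShift hp 0 = 1 := Equiv.ext (oddShiftFun_zero hp)

theorem oddShift_mul (c d : ZMod p) : oddShift hp c * oddShift hp d = oddShift hp (c + d) :=
  Equiv.ext (oddShiftFun_oddShiftFun hp c d)

theorem oddShift_zpow (c : ZMod p) (k : ℤ) : oddShift hp c ^ k = oddShift hp (k * c) := by
  induction k using Int.induction_on with
  | zero => rw [zpow_zero, Int.cast_zero, zero_mul, oddShift_zero]
  | succ k ih => rw [zpow_add_one, ih, oddShift_mul]; push_cast; ring_nf
  | pred k ih =>
    have hinv : (oddShift hp c)⁻¹ = oddShift hp (-c) :=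
      inv_eq_of_mul_eq_one_right (by rw [oddShift_mul, add_neg_cancel, oddShift_zero])
    rw [zpow_sub_one, ih, hinv, oddShift_mul]; push_cast; ring_nf

end OddShift

namespace Lambda

variable {p q : ℕ} {i₁ j₁ i₂ j₂ : ℤ}

abbrev x : Lambda p q i₁ j₁ i₂ j₂ := PresentedGroup.of 0

abbrev y : Lambda p q i₁ j₁ i₂ j₂ := PresentedGroup.of 1

theorem x_pow : (x : Lambda p q i₁ j₁ i₂ j₂) ^ p = 1 := by
  have := PresentedGroup.one_of_mem (rels := lambdaRels p q i₁ j₁ i₂ j₂)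
    (x := FreeGroup.of 0 ^ p) (by simp [lambdaRels])
  rwa [map_pow] at this

theorem y_pow : (y : Lambda p q i₁ j₁ i₂ j₂) ^ q = 1 := by
  have := PresentedGroup.one_of_mem (rels := lambdaRels p q i₁ j₁ i₂ j₂)
    (x := FreeGroup.of 1 ^ q) (by simp [lambdaRels])
  rwa [map_pow] at this

theorem x_mul_y_sq : ((x : Lambda p q i₁ j₁ i₂ j₂) * y) ^ 2 = 1 := by
  have := PresentedGroup.one_of_mem (rels := lambdaRels p q i₁ j₁ i₂ j₂)
    (x := (FreeGroup.of 0 * FreeGroup.of 1) ^ 2) (by simp [lambdaRels])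
  rwa [map_pow, map_mul] at this

theorem inv_y_mul_x : (y : Lambda p q i₁ j₁ i₂ j₂)⁻¹ * x = x ^ i₁ * y ^ j₁ := by
  have := PresentedGroup.one_of_mem (rels := lambdaRels p q i₁ j₁ i₂ j₂)
    (x := (FreeGroup.of 1)⁻¹ * FreeGroup.of 0 *
      (FreeGroup.of 0 ^ i₁ * FreeGroup.of 1 ^ j₁)⁻¹)
    (by simp [lambdaRels])
  simp only [map_mul, map_inv, map_zpow, mul_inv_eq_one] at this
  exact this

theorem y_mul_inv_x : (y : Lambda p q i₁ j₁ i₂ j₂) * x⁻¹ = x ^ i₂ * y ^ j₂ := by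
  have := PresentedGroup.one_of_mem (rels := lambdaRels p q i₁ j₁ i₂ j₂)
    (x := FreeGroup.of 1 * (FreeGroup.of 0)⁻¹ *
      (FreeGroup.of 0 ^ i₂ * FreeGroup.of 1 ^ j₂)⁻¹)
    (by simp [lambdaRels])
  simp only [map_mul, map_inv, map_zpow, mul_inv_eq_one] at this
  exact this

theorem closure_x_y : Subgroup.closure {(x : Lambda p q i₁ j₁ i₂ j₂), y} = ⊤ := by
  rw [← PresentedGroup.closure_range_of]
  congr
  ext g
  simp [Fin.exists_fin_two, eq_comm]

def lift {H : Type*} [Group H] (X Y : H) (h₁ : X ^ p = 1) (h₂ : Y ^ q = 1)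
    (h₃ : (X * Y) ^ 2 = 1) (h₄ : Y⁻¹ * X = X ^ i₁ * Y ^ j₁)
    (h₅ : Y * X⁻¹ = X ^ i₂ * Y ^ j₂) : Lambda p q i₁ j₁ i₂ j₂ →* H :=
  PresentedGroup.toGroup (f := ![X, Y]) <| by
    rintro r (rfl | rfl | rfl | rfl | rfl) <;> simp [h₁, h₂, h₃, h₄, h₅]

section Lift

variable {H : Type*} [Group H] {X Y : H} {h₁ : X ^ p = 1} {h₂ : Y ^ q = 1}
  {h₃ : (X * Y) ^ 2 = 1} {h₄ : Y⁻¹ * X = X ^ i₁ * Y ^ j₁}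
  {h₅ : Y * X⁻¹ = X ^ i₂ * Y ^ j₂}

theorem lift_x : lift X Y h₁ h₂ h₃ h₄ h₅ x = X := PresentedGroup.toGroup.of _

theorem lift_y : lift X Y h₁ h₂ h₃ h₄ h₅ y = Y := PresentedGroup.toGroup.of _

end Lift

theorem exists_eq_zpow_mul_zpow (hp : p ≠ 0) (g : Lambda p q 3 j₁ i₂ j₂) :
    ∃ i j : ℤ, g = x ^ i * y ^ j := by
  have hyx : (y : Lambda p q 3 j₁ i₂ j₂) * x = x⁻¹ * y⁻¹ :=
    calc y * x = x⁻¹ * (x * y) ^ 2 * y⁻¹ := by rw [sq]; group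
      _ = x⁻¹ * y⁻¹ := by rw [x_mul_y_sq, mul_one]
  have hyx2 : (y : Lambda p q 3 j₁ i₂ j₂) * x ^ 2 = x ^ 2 * y ^ j₁ :=
    calc y * x ^ 2 = x⁻¹ * (y⁻¹ * x) := by rw [sq, ← mul_assoc, hyx, mul_assoc]
      _ = x ^ 2 * y ^ j₁ := by rw [inv_y_mul_x]; group
  have hcomm := zpow_mul_pow_eq_of_mul_eq hyx2
  refine exists_eq_zpow_mul_zpow_of_closure_eq_top closure_x_y
    (isOfFinOrder_iff_pow_eq_one.mpr ⟨p, Nat.pos_of_ne_zero hp, x_pow⟩) (fun n => ?_)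
    (fun n => ?_) g
  · obtain ⟨m, rfl | rfl⟩ := Nat.even_or_odd' n
    · refine ⟨2 * m, j₁ ^ m, ?_⟩
      rw [pow_mul, ← zpow_one y, hcomm]
      group
    · refine ⟨2 * m - 1, -j₁ ^ m, ?_⟩
      rw [pow_succ', ← mul_assoc, hyx, mul_assoc, pow_mul, ← zpow_neg_one y, hcomm]
      group
  · obtain ⟨m, rfl | rfl⟩ := Nat.even_or_odd' n
    · refine ⟨2 * m, -j₁ ^ m, ?_⟩
      rw [pow_mul, ← zpow_neg_one y, hcomm]
      group
    · refine ⟨2 * m + 3, j₁ ^ (m + 1), ?_⟩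
      rw [pow_succ', ← mul_assoc, inv_y_mul_x, mul_assoc, pow_mul, hcomm]
      group

theorem zpow_mul_zpow_eq_of_mulEquiv
    {φ : Lambda p q i₁ j₁ i₂ j₂ ≃* Lambda p q i₁ j₁ i₂ j₂}
    (hx : φ x = x⁻¹) (hy : φ y = y⁻¹) :
    (x : Lambda p q i₁ j₁ i₂ j₂) ^ (-i₁) * y ^ (-j₁) = x ^ i₂ * y ^ j₂ := by
  have := congrArg φ inv_y_mul_x
  simp only [map_mul, map_inv, map_zpow, hx, hy, inv_inv, inv_zpow'] at this
  rw [← this, y_mul_inv_x]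

theorem not_exists_mulEquiv_inv
    (hj : ¬ (orderOf (y : Lambda p q i₁ j₁ (-i₁) j₂) : ℤ) ∣ j₁ + j₂) :
    ¬ ∃ φ : Lambda p q i₁ j₁ (-i₁) j₂ ≃* Lambda p q i₁ j₁ (-i₁) j₂,
      φ x = x⁻¹ ∧ φ y = y⁻¹ := by
  rintro ⟨φ, hx, hy⟩
  refine hj (orderOf_dvd_iff_zpow_eq_one.mpr ?_)
  have := zpow_mul_zpow_eq_of_mulEquiv hx hy
  rwa [mul_right_inj, zpow_neg, inv_eq_iff_mul_eq_one, ← zpow_add] at this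

section Quadratic

variable {e : ℤ} {t : ZMod q}

noncomputable def quadraticRep (hp : 8 ∣ p) (he : (e : ZMod q) = 2 * t) (h2 : 2 * t ^ 2 = 0)
    (h8 : 8 * t = 0) : Lambda p q 3 (1 + e) (-3) (-1 + e) →* Equiv.Perm (ZMod q) :=
  have hsq := ZMod.mul_sq_eq_mul_of_two_mul_eq_zero h2
  have hcube (z : ZMod q) : (quadPerm h2 ^ (3 : ℤ)) z = (1 - 2 * t) * quadMap t z := by
    rw [zpow_ofNat, pow_succ, Equiv.Perm.mul_apply, quadPerm_sq_apply, quadPerm_apply]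
  lift (quadPerm h2) (Equiv.addLeft 1)
    (by
      obtain ⟨k, rfl⟩ := hp
      suffices quadPerm h2 ^ 8 = 1 by rw [pow_mul, this, one_pow]
      ext z
      rw [show 8 = 2 * 4 from rfl, pow_mul]
      simp only [pow_succ (quadPerm h2 ^ 2), pow_zero, one_mul, Equiv.Perm.mul_apply,
        quadPerm_sq_apply, Equiv.Perm.one_apply]
      linear_combination (12 * z - 16 * t * z + 8 * t ^ 2 * z) * h2 - z * h8)
    (addLeft_one_pow_self q)
    (by
      ext z
      simp only [sq, Equiv.Perm.mul_apply, quadPerm_apply, Equiv.coe_addLeft,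
        Equiv.Perm.one_apply]
      unfold quadMap
      linear_combination (-3 * z - 2 * t * z) * h2 +
        (-5 - 2 * z - 4 * t - 3 * t * z - t * z ^ 2) * hsq z)
    (by
      rw [inv_mul_eq_iff_eq_mul]
      ext z
      rw [Equiv.Perm.mul_apply, Equiv.Perm.mul_apply, hcube, Equiv.addLeft_one_zpow_apply]
      push_cast
      rw [he, quadPerm_apply, Equiv.coe_addLeft]
      unfold quadMap
      linear_combination (-1 - 4 * t * z - 4 * t ^ 2) * h2 - 2 * hsq z)
    (by
      rw [zpow_neg, eq_inv_mul_iff_mul_eq, ← mul_assoc, mul_inv_eq_iff_eq_mul]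
      ext z
      rw [Equiv.Perm.mul_apply, Equiv.Perm.mul_apply, hcube, Equiv.addLeft_one_zpow_apply]
      push_cast
      rw [he, quadPerm_apply, Equiv.coe_addLeft]
      unfold quadMap
      linear_combination (2 * z) * h2 + 2 * hsq z)

theorem orderOf_y_of_quadratic (hp : 8 ∣ p) (he : (e : ZMod q) = 2 * t) (h2 : 2 * t ^ 2 = 0)
    (h8 : 8 * t = 0) : orderOf (y : Lambda p q 3 (1 + e) (-3) (-1 + e)) = q :=
  orderOf_eq_of_map (quadraticRep hp he h2 h8) y_pow <| by
    rw [quadraticRep, lift_y, orderOf_addLeft_one]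

theorem zpowers_x_inf_zpowers_y_of_quadratic (hp : 8 ∣ p) (he : (e : ZMod q) = 2 * t)
    (h2 : 2 * t ^ 2 = 0) (h8 : 8 * t = 0) :
    Subgroup.zpowers (x : Lambda p q 3 (1 + e) (-3) (-1 + e)) ⊓ Subgroup.zpowers y = ⊥ := by
  refine zpowers_inf_zpowers_eq_bot_of_map (quadraticRep hp he h2 h8) (x₀ := 0)
    (by rw [quadraticRep, lift_x, quadPerm_apply, quadMap]; ring) fun j hj => ?_
  rw [quadraticRep, lift_y, Equiv.addLeft_one_zpow_apply, add_zero,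
    ZMod.intCast_zmod_eq_zero_iff_dvd, ← orderOf_y_of_quadratic hp he h2 h8] at hj
  exact orderOf_dvd_iff_zpow_eq_one.mp hj

end Quadratic

section Parity

def parityRep (hp : 2 ∣ p) (hq : 2 * (q : ZMod p) = 0) (h₁ : 2 * (j₁ : ZMod p) = 2)
    (h₂ : 2 * (j₂ : ZMod p) = -2) : Lambda p q 3 j₁ (-3) j₂ →* Equiv.Perm (ZMod p) :=
  have hpar (i : ZMod p) : parity hp i = 0 ∨ parity hp i = 1 := by
    generalize parity hp i = z; revert z; decide
  have h11 : (1 + 1 : ZMod 2) = 0 := rfl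
  lift (Equiv.addLeft 1) (oddShift hp (-1))
    (addLeft_one_pow_self p)
    (by
      rw [← zpow_natCast, oddShift_zpow]
      ext i
      rw [oddShift_apply, Equiv.Perm.one_apply, Int.cast_natCast]
      split_ifs
      · rfl
      · linear_combination -hq)
    (by
      ext i
      simp only [sq, Equiv.Perm.mul_apply, Equiv.coe_addLeft, oddShift_apply,
        Equiv.Perm.one_apply]
      rcases hpar i with h | h <;>
        simp only [h, map_add, map_one, map_neg, parity_two, h11, neg_zero, add_zero,
          one_ne_zero, mul_neg, mul_one, ↓reduceIte] <;>
        ring)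
    (by
      rw [inv_mul_eq_iff_eq_mul]
      ext i
      simp only [Equiv.Perm.mul_apply, oddShift_zpow, Equiv.addLeft_one_zpow_apply,
        Equiv.coe_addLeft, oddShift_apply]
      rcases hpar i with h | h <;>
        simp only [h, map_add, map_neg, map_mul, map_intCast, parity_two, parity_three, h11,
          Int.cast_ofNat, zero_mul, neg_zero, add_zero, one_ne_zero, mul_neg, mul_one,
          ↓reduceIte]
      · ring
      · linear_combination h₁)
    (by
      rw [zpow_neg, eq_inv_mul_iff_mul_eq, ← mul_assoc, mul_inv_eq_iff_eq_mul]
      ext i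
      simp only [Equiv.Perm.mul_apply, oddShift_zpow, Equiv.addLeft_one_zpow_apply,
        Equiv.coe_addLeft, oddShift_apply]
      rcases hpar i with h | h <;>
        simp only [h, map_add, map_one, h11, Int.cast_ofNat, add_zero, one_ne_zero, mul_neg,
          mul_one, ↓reduceIte]
      · linear_combination h₂
      · ring)

theorem orderOf_x_of_parity (hp : 2 ∣ p) (hq : 2 * (q : ZMod p) = 0)
    (h₁ : 2 * (j₁ : ZMod p) = 2) (h₂ : 2 * (j₂ : ZMod p) = -2) :
    orderOf (x : Lambda p q 3 j₁ (-3) j₂) = p :=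
  orderOf_eq_of_map (parityRep hp hq h₁ h₂) x_pow <| by
    rw [parityRep, lift_x, orderOf_addLeft_one]

end Parity

end Lambda

theorem exists_intCast_mul_two_pow_eq_two_mul {β : ℕ} (hβ : 5 ≤ β) (ε : ℤ) :
    ∃ t : ZMod (2 ^ β), ((ε * 2 ^ (β - 2) : ℤ) : ZMod (2 ^ β)) = 2 * t ∧ 2 * t ^ 2 = 0 ∧
      8 * t = 0 := by
  obtain ⟨k, rfl⟩ := Nat.exists_eq_add_of_le' hβ
  have h := ZMod.pow_eq_zero_of_le 2 (le_refl (k + 5))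
  push_cast at h
  refine ⟨ε * 2 ^ (k + 2), ?_, ?_, ?_⟩
  · rw [show k + 5 - 2 = k + 3 by omega]; push_cast; ring
  · linear_combination (ε ^ 2 * 2 ^ k) * h
  · linear_combination ε * h

theorem not_two_pow_dvd_two_pow_mul_of_odd {k β : ℕ} (hk : k < β) {ε : ℤ} (hε : Odd ε) :
    ¬ (2 : ℤ) ^ β ∣ 2 ^ k * ε := by
  intro h
  have : (2 : ℤ) ^ k * 2 ∣ 2 ^ k * ε := (pow_succ (2 : ℤ) k ▸ pow_dvd_pow 2 hk).trans h
  exact Int.not_even_iff_odd.mpr hε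
    (even_iff_two_dvd.mpr ((mul_dvd_mul_iff_left (by positivity)).mp this))

/-- `Λ(2^α, 2^β; 3, 1 + ε·2^(β-2), -3, -1 + ε·2^(β-2))` (for `α ≥ 3`, `β ≥ 5`,
`β ≥ α + 1`, `ε = ±1`) is the automorphism group of a tight chiral polyhedron of
type `{2^α, 2^β}`. -/
theorem even_centrals_tight_chiral (α β : ℕ) (hα : 3 ≤ α) (hβ : 5 ≤ β)
    (hαβ : α + 1 ≤ β) (ε : ℤ) (hε : ε = 1 ∨ ε = -1) :
    let G := Lambda (2 ^ α) (2 ^ β) 3 (1 + ε * 2 ^ (β - 2)) (-3) (-1 + ε * 2 ^ (β - 2))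
    let a : G := PresentedGroup.of 0
    let b : G := PresentedGroup.of 1
    Finite G ∧ orderOf a = 2 ^ α ∧ orderOf b = 2 ^ β ∧ (a * b) ^ 2 = 1 ∧
      Subgroup.zpowers a ⊓ Subgroup.zpowers b = ⊥ ∧
      (∀ g : G, ∃ i j : ℤ, g = a ^ i * b ^ j) ∧
      ¬ ∃ φ : G ≃* G, φ a = a⁻¹ ∧ φ b = b⁻¹ := by
  intro G a b
  obtain ⟨t, he, h2, h8⟩ := exists_intCast_mul_two_pow_eq_two_mul hβ ε
  have hb : orderOf b = 2 ^ β := Lambda.orderOf_y_of_quadratic (pow_dvd_pow 2 hα) he h2 h8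
  have ha : orderOf a = 2 ^ α := by
    have h2α {k : ℕ} (hk : α ≤ k) : (2 : ZMod (2 ^ α)) ^ k = 0 := by
      exact_mod_cast ZMod.pow_eq_zero_of_le 2 hk
    refine Lambda.orderOf_x_of_parity (dvd_pow_self 2 (by omega)) ?_ ?_ ?_ <;> push_cast
    · linear_combination h2α (show α ≤ β + 1 by omega)
    · linear_combination ε * h2α (show α ≤ β - 2 + 1 by omega)
    · linear_combination ε * h2α (show α ≤ β - 2 + 1 by omega)
  have htight : ∀ g : G, ∃ i j : ℤ, g = a ^ i * b ^ j :=
    Lambda.exists_eq_zpow_mul_zpow (by positivity)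
  refine ⟨finite_of_forall_eq_zpow_mul_zpow (orderOf_pos_iff.mp (by rw [ha]; positivity))
      (orderOf_pos_iff.mp (by rw [hb]; positivity)) htight, ha, hb, Lambda.x_mul_y_sq,
    Lambda.zpowers_x_inf_zpowers_y_of_quadratic (pow_dvd_pow 2 hα) he h2 h8, htight,
    Lambda.not_exists_mulEquiv_inv ?_⟩
  have hodd : Odd ε := by rcases hε with rfl | rfl <;> decide
  rw [hb, show 1 + ε * 2 ^ (β - 2) + (-1 + ε * 2 ^ (β - 2)) = 2 ^ (β - 2 + 1) * ε by ring]
  exact_mod_cast not_two_pow_dvd_two_pow_mul_of_odd (by omega) hodd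
end
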